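/- The E₆ root set S is exactly the orbit of the set of simple roots {r₁,…,r₆} under the Weyl group W of E₆, i.e. S = { w(rᵢ) : w ∈ W, 1 ≤ i ≤ 6 }, where W is the subgroup of the orthogonal group of ℝ⁶ generated by the six simple reflections s_{r₁},…,s_{r₆}. -/

import Mathlib

noncomputable section

open scoped RealInnerProductSpace

/-- The standard orthonormal basis vectors `e₁, …, e₆` of `ℝ⁶` (0-indexed). -/
def e : Fin 6 → EuclideanSpace ℝ (Fin 6) := fun i => EuclideanSpace.single i 1

/-- The simple roots of `E₆` (0-indexed as `r 0, …, r 5`). -/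
def r : Fin 6 → EuclideanSpace ℝ (Fin 6) :=
  ![e 0 + e 1, e 1 - e 0, e 2 - e 1, e 3 - e 2, e 4 - e 3,
    (1/2 : ℝ) • (e 0 - e 1 - e 2 - e 3 - e 4 + Real.sqrt 3 • e 5)]

/-- The `E₆` root set: the vectors `±eᵢ±eⱼ` for `1 ≤ i < j ≤ 5`, together with the vectors
`(ε₁e₁+ε₂e₂+ε₃e₃+ε₄e₄+ε₅e₅+ε√3·e₆)/2` with all signs `±1` and `ε·ε₁ε₂ε₃ε₄ε₅ = 1`. -/
def S : Set (EuclideanSpace ℝ (Fin 6)) :=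
  {v | ∃ i j : Fin 6, i < j ∧ (j : ℕ) ≤ 4 ∧
    ∃ a b : ℝ, (a = 1 ∨ a = -1) ∧ (b = 1 ∨ b = -1) ∧ v = a • e i + b • e j} ∪
  {v | ∃ ε : Fin 6 → ℝ, (∀ k, ε k = 1 ∨ ε k = -1) ∧
    ε 5 * (ε 0 * ε 1 * ε 2 * ε 3 * ε 4) = 1 ∧
    v = (1/2 : ℝ) • (ε 0 • e 0 + ε 1 • e 1 + ε 2 • e 2 + ε 3 • e 3 + ε 4 • e 4 +
      (ε 5 * Real.sqrt 3) • e 5)}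

/-- The Weyl group `W` of `E₆`: the subgroup of the orthogonal group of `ℝ⁶` (the group of
linear isometries of `ℝ⁶`) generated by the six simple reflections
`s_{rᵢ} : v ↦ v − ⟨v,rᵢ⟩·rᵢ`. -/
def W : Subgroup (EuclideanSpace ℝ (Fin 6) ≃ₗᵢ[ℝ] EuclideanSpace ℝ (Fin 6)) :=
  Subgroup.closure {g | ∃ i : Fin 6, ∀ v, g v = v - ⟪v, r i⟫ • r i}

/-! In doubled coordinates, with the factor `√3` of the last coordinate absorbed, the 72 roots
become integer vectors, and a simple reflection acts on them by an integral formula; everything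
finite is then checked by computation. The root set is closed under the simple reflections, and a
finite set mapped into itself by the generators of a group of bijections is mapped into itself by
the whole group, so `W` preserves `S` and the orbit of the simple roots lies in `S`. Conversely,
at every root other than a simple one some simple reflection lowers `|2 ht - 1|` (`ht` the height),
so every root descends to a simple root through simple reflections and lies in the orbit. -/

open Set

theorem Submodule.reflection_orthogonalComplement_singleton_apply_of_inner_self_eq_two
    {E : Type*} [NormedAddCommGroup E] [InnerProductSpace ℝ E] {u : E} (hu : ⟪u, u⟫ = 2)
    (v : E) : (ℝ ∙ u)ᗮ.reflection v = v - ⟪v, u⟫ • u := by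
  have hnorm : ‖u‖ ^ 2 = 2 := by rw [← real_inner_self_eq_norm_sq, hu]
  rw [reflection_orthogonal_apply, reflection_singleton_apply, RCLike.ofReal_real_eq_id, id,
    hnorm, real_inner_comm]
  module

theorem LinearIsometryEquiv.mapsTo_of_mem_closure {R E : Type*} [Semiring R]
    [SeminormedAddCommGroup E] [Module R E] {A : Set (E ≃ₗᵢ[R] E)} {T : Set E} (hT : T.Finite)
    (hA : ∀ g ∈ A, MapsTo g T T) {w : E ≃ₗᵢ[R] E} (hw : w ∈ Subgroup.closure A) :
    MapsTo w T T := by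
  induction hw using Subgroup.closure_induction with
  | mem g hg => exact hA g hg
  | one => exact mapsTo_id T
  | mul g h _ _ hg hh => exact hg.comp hh
  | inv g _ hg =>
    have hbij : BijOn g T T := (hT.injOn_iff_bijOn_of_mapsTo hg).mp g.injective.injOn
    intro y hy
    obtain ⟨x, hx, rfl⟩ := hbij.surjOn hy
    simpa using hx

theorem forall_mem_of_descent {α ι : Type*} {T B : Set α} {P : α → Prop} (f : ι → α → α)
    (μ : α → ℕ) (hB : ∀ a ∈ B, P a) (hstep : ∀ a ∈ T, ∀ i, P (f i a) → P a)
    (hdesc : ∀ a ∈ T, a ∈ B ∨ ∃ i, f i a ∈ T ∧ μ (f i a) < μ a) : ∀ a ∈ T, P a := by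
  intro a
  induction hμ : μ a using Nat.strong_induction_on generalizing a with
  | _ n ih =>
    intro ha
    rcases hdesc a ha with hb | ⟨i, hi, hlt⟩
    · exact hB a hb
    · exact hstep a ha i (ih _ (hμ ▸ hlt) _ rfl hi)

namespace E6

def embed (a : Fin 6 → ℤ) : EuclideanSpace ℝ (Fin 6) :=
  WithLp.toLp 2 fun k => (a k : ℝ) / 2 * if k = 5 then √3 else 1

theorem embed_eq_half_smul (a : Fin 6 → ℤ) :
    embed a = (1 / 2 : ℝ) • ((a 0 : ℝ) • e 0 + (a 1 : ℝ) • e 1 + (a 2 : ℝ) • e 2 + (a 3 : ℝ) • e 3 +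
      (a 4 : ℝ) • e 4 + ((a 5 : ℝ) * √3) • e 5) := by
  ext k
  fin_cases k <;> simp [embed, e] <;> ring

def form (a b : Fin 6 → ℤ) : ℤ :=
  a 0 * b 0 + a 1 * b 1 + a 2 * b 2 + a 3 * b 3 + a 4 * b 4 + 3 * (a 5 * b 5)

theorem inner_embed (a b : Fin 6 → ℤ) : ⟪embed a, embed b⟫ = form a b / 4 := by
  have h3 : √3 * √3 = 3 := Real.mul_self_sqrt (by norm_num)
  simp only [embed, PiLp.inner_apply, RCLike.inner_apply, conj_trivial, Fin.sum_univ_six, form]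
  push_cast
  linear_combination (a 5 * b 5 / 4 : ℝ) * h3

def simpleRoot : Fin 6 → Fin 6 → ℤ :=
  ![![2, 2, 0, 0, 0, 0], ![-2, 2, 0, 0, 0, 0], ![0, -2, 2, 0, 0, 0],
    ![0, 0, -2, 2, 0, 0], ![0, 0, 0, -2, 2, 0], ![1, -1, -1, -1, -1, 1]]

theorem embed_simpleRoot (i : Fin 6) : embed (simpleRoot i) = r i := by
  ext k
  fin_cases i <;> fin_cases k <;> simp [embed, simpleRoot, r, e] <;> norm_num

def reflect (i : Fin 6) (a : Fin 6 → ℤ) : Fin 6 → ℤ :=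
  a - (form a (simpleRoot i) / 4) • simpleRoot i

theorem embed_reflect {i : Fin 6} {a : Fin 6 → ℤ} (h : 4 ∣ form a (simpleRoot i)) :
    embed (reflect i a) = embed a - ⟪embed a, r i⟫ • r i := by
  rw [← embed_simpleRoot, inner_embed, ← Int.cast_ofNat, ← Int.cast_div h (by norm_num)]
  ext k
  simp only [embed, reflect, zsmul_eq_mul, Pi.sub_apply, Pi.mul_apply, Pi.intCast_apply,
    Int.cast_eq, Int.cast_sub, Int.cast_mul, mul_ite, mul_one, PiLp.sub_apply, PiLp.smul_apply,
    smul_eq_mul]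
  split_ifs <;> ring

def signs : Finset ℤ := {1, -1}

theorem exists_mem_signs_eq_iff {x : ℝ} : (∃ s ∈ signs, x = s) ↔ x = 1 ∨ x = -1 := by
  simp [signs]

def pairRoot (i j : Fin 6) (s t : ℤ) : Fin 6 → ℤ := (2 * s) • Pi.single i 1 + (2 * t) • Pi.single j 1

def pairRoots : Finset (Fin 6 → ℤ) :=
  ((Finset.univ ×ˢ Finset.univ ×ˢ signs ×ˢ signs).filter fun p : Fin 6 × Fin 6 × ℤ × ℤ =>
      p.1 < p.2.1 ∧ (p.2.1 : ℕ) ≤ 4).image fun p => pairRoot p.1 p.2.1 p.2.2.1 p.2.2.2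

def halfRoots : Finset (Fin 6 → ℤ) :=
  (Fintype.piFinset fun _ => signs).filter fun a => a 5 * (a 0 * a 1 * a 2 * a 3 * a 4) = 1

def roots : Finset (Fin 6 → ℤ) := pairRoots ∪ halfRoots

theorem mem_pairRoots {a : Fin 6 → ℤ} : a ∈ pairRoots ↔
    ∃ i j : Fin 6, i < j ∧ (j : ℕ) ≤ 4 ∧ ∃ s ∈ signs, ∃ t ∈ signs, pairRoot i j s t = a := by
  simp only [pairRoots, Finset.mem_image, Finset.mem_filter, Finset.mem_product,
    Finset.mem_univ, true_and, Prod.exists]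
  constructor
  · rintro ⟨i, j, s, t, ⟨⟨hs, ht⟩, hij, hj⟩, rfl⟩
    exact ⟨i, j, hij, hj, s, hs, t, ht, rfl⟩
  · rintro ⟨i, j, hij, hj, s, hs, t, ht, rfl⟩
    exact ⟨i, j, s, t, ⟨⟨hs, ht⟩, hij, hj⟩, rfl⟩

theorem embed_pairRoot {i j : Fin 6} (hi : (i : ℕ) ≤ 4) (hj : (j : ℕ) ≤ 4) (s t : ℤ) :
    embed (pairRoot i j s t) = (s : ℝ) • e i + (t : ℝ) • e j := by
  ext k
  rcases eq_or_ne k 5 with rfl | hk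
  · have hi5 : (5 : Fin 6) ≠ i := fun h => by simp [← h] at hi
    have hj5 : (5 : Fin 6) ≠ j := fun h => by simp [← h] at hj
    simp [embed, pairRoot, e, Pi.single_apply, hi5, hj5]
  · simp only [embed, pairRoot, e, hk, if_false, mul_one, PiLp.add_apply, PiLp.smul_apply,
      PiLp.single_apply, Pi.add_apply, Pi.smul_apply, Pi.single_apply, smul_eq_mul]
    push_cast
    split_ifs <;> ring

theorem embed_image_pairRoots : embed '' pairRoots =
    {v | ∃ i j : Fin 6, i < j ∧ (j : ℕ) ≤ 4 ∧
      ∃ a b : ℝ, (a = 1 ∨ a = -1) ∧ (b = 1 ∨ b = -1) ∧ v = a • e i + b • e j} := by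
  ext v
  simp only [mem_image, Finset.mem_coe, mem_pairRoots]
  constructor
  · rintro ⟨_, ⟨i, j, hij, hj, s, hs, t, ht, rfl⟩, rfl⟩
    have hi : (i : ℕ) ≤ 4 := by omega
    exact ⟨i, j, hij, hj, s, t, exists_mem_signs_eq_iff.mp ⟨s, hs, rfl⟩,
      exists_mem_signs_eq_iff.mp ⟨t, ht, rfl⟩, embed_pairRoot hi hj s t⟩
  · rintro ⟨i, j, hij, hj, x, y, hx, hy, rfl⟩
    obtain ⟨s, hs, rfl⟩ := exists_mem_signs_eq_iff.mpr hx
    obtain ⟨t, ht, rfl⟩ := exists_mem_signs_eq_iff.mpr hy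
    have hi : (i : ℕ) ≤ 4 := by omega
    exact ⟨_, ⟨i, j, hij, hj, s, hs, t, ht, rfl⟩, embed_pairRoot hi hj s t⟩

theorem embed_image_halfRoots : embed '' halfRoots =
    {v | ∃ ε : Fin 6 → ℝ, (∀ k, ε k = 1 ∨ ε k = -1) ∧
      ε 5 * (ε 0 * ε 1 * ε 2 * ε 3 * ε 4) = 1 ∧
      v = (1/2 : ℝ) • (ε 0 • e 0 + ε 1 • e 1 + ε 2 • e 2 + ε 3 • e 3 + ε 4 • e 4 +
        (ε 5 * Real.sqrt 3) • e 5)} := by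
  ext v
  simp only [mem_image, Finset.mem_coe, halfRoots, Finset.mem_filter, Fintype.mem_piFinset]
  constructor
  · rintro ⟨a, ⟨ha, hprod⟩, rfl⟩
    exact ⟨fun k => a k, fun k => exists_mem_signs_eq_iff.mp ⟨a k, ha k, rfl⟩,
      by dsimp only; exact_mod_cast hprod, embed_eq_half_smul a⟩
  · rintro ⟨ε, hε, hprod, rfl⟩
    choose a ha hεa using fun k => exists_mem_signs_eq_iff.mpr (hε k)
    obtain rfl : ε = fun k => (a k : ℝ) := funext hεa
    dsimp only at hprod
    exact ⟨a, ⟨ha, by exact_mod_cast hprod⟩, embed_eq_half_smul a⟩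

theorem embed_image_roots : embed '' roots = S := by
  rw [roots, Finset.coe_union, image_union, embed_image_pairRoots, embed_image_halfRoots]
  rfl

set_option maxRecDepth 100000 in
theorem simpleRoot_mem_roots : ∀ i, simpleRoot i ∈ roots := by decide

set_option maxRecDepth 100000 in
theorem four_dvd_form_simpleRoot : ∀ a ∈ roots, ∀ i, 4 ∣ form a (simpleRoot i) := by decide

set_option maxRecDepth 100000 in
theorem reflect_mem_roots : ∀ a ∈ roots, ∀ i, reflect i a ∈ roots := by decide

/-- `2⟪embed a, ρ⟫` for `ρ = e₂ + 2e₃ + 3e₄ + 4e₅ + 4√3·e₆`, which pairs to `1` with every simple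
root: twice the height of a root. -/
def twiceHeight (a : Fin 6 → ℤ) : ℤ := a 1 + 2 * a 2 + 3 * a 3 + 4 * a 4 + 12 * a 5

/- `|2 ht - 1|` is `2 ht - 1` on positive roots and `2 |ht| + 1` on negative ones: lowering it
takes a positive root down, a negative root up, and `-αᵢ` to `αᵢ`. -/
set_option maxRecDepth 100000 in
theorem eq_simpleRoot_or_exists_descent : ∀ a ∈ roots, (∃ i, simpleRoot i = a) ∨
    ∃ i, (twiceHeight (reflect i a) - 1).natAbs < (twiceHeight a - 1).natAbs := by
  decide

def simpleReflection (i : Fin 6) : EuclideanSpace ℝ (Fin 6) ≃ₗᵢ[ℝ] EuclideanSpace ℝ (Fin 6) :=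
  (ℝ ∙ r i)ᗮ.reflection

theorem inner_r_self (i : Fin 6) : ⟪r i, r i⟫ = 2 := by
  rw [← embed_simpleRoot, inner_embed, show form (simpleRoot i) (simpleRoot i) = 8 by
    revert i; decide]
  norm_num

theorem simpleReflection_apply (i : Fin 6) (v : EuclideanSpace ℝ (Fin 6)) :
    simpleReflection i v = v - ⟪v, r i⟫ • r i :=
  Submodule.reflection_orthogonalComplement_singleton_apply_of_inner_self_eq_two (inner_r_self i) v

theorem simpleReflection_mem_W (i : Fin 6) : simpleReflection i ∈ W :=
  Subgroup.subset_closure ⟨i, simpleReflection_apply i⟩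

theorem r_mem_S (i : Fin 6) : r i ∈ S :=
  embed_image_roots ▸ ⟨simpleRoot i, simpleRoot_mem_roots i, embed_simpleRoot i⟩

theorem mapsTo_S {w : EuclideanSpace ℝ (Fin 6) ≃ₗᵢ[ℝ] EuclideanSpace ℝ (Fin 6)} (hw : w ∈ W) :
    MapsTo w S S := by
  rw [← embed_image_roots]
  refine LinearIsometryEquiv.mapsTo_of_mem_closure ((Finset.finite_toSet _).image _) ?_ hw
  rintro g ⟨i, hg⟩ _ ⟨a, ha, rfl⟩
  exact ⟨reflect i a, reflect_mem_roots a ha i,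
    by rw [hg, embed_reflect (four_dvd_form_simpleRoot a ha i)]⟩

theorem embed_mem_weylOrbit :
    ∀ a ∈ roots, embed a ∈ {v | ∃ w ∈ W, ∃ i : Fin 6, v = w (r i)} := by
  refine forall_mem_of_descent (B := range simpleRoot) reflect
    (fun a => (twiceHeight a - 1).natAbs) ?_ ?_ ?_
  · rintro _ ⟨i, rfl⟩
    exact ⟨1, one_mem W, i, embed_simpleRoot i⟩
  · rintro a ha i ⟨w, hw, j, hj⟩
    refine ⟨simpleReflection i * w, mul_mem (simpleReflection_mem_W i) hw, j, ?_⟩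
    rw [LinearIsometryEquiv.coe_mul, Function.comp_apply, ← hj,
      embed_reflect (four_dvd_form_simpleRoot a ha i), ← simpleReflection_apply, simpleReflection,
      Submodule.reflection_reflection]
  · intro a ha
    exact (eq_simpleRoot_or_exists_descent a ha).imp id
      fun ⟨i, hi⟩ => ⟨i, reflect_mem_roots a ha i, hi⟩

end E6

/-- The `E₆` root set `S` is exactly the orbit of the simple roots under the Weyl group:
`S = { w(rᵢ) : w ∈ W, 1 ≤ i ≤ 6 }`. -/
theorem e6_roots_eq_weyl_orbit_of_simple_roots :
    S = {v | ∃ w ∈ W, ∃ i : Fin 6, v = w (r i)} := by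
  refine Subset.antisymm ?_ ?_
  · rw [← E6.embed_image_roots]
    rintro _ ⟨a, ha, rfl⟩
    exact E6.embed_mem_weylOrbit a ha
  · rintro _ ⟨w, hw, i, rfl⟩
    exact E6.mapsTo_S hw (E6.r_mem_S i)
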